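/- For every classical solution u of the 1-D homogeneous wave equation on (-1,1) with homogeneous Dirichlet boundary conditions, at the critical observation time T = 4 the boundary observation exactly equals a fixed multiple of the energy: ∫_0^4 |u_x(1,t)|² dt = 4·E(u(0)). In particular the observability and direct inequalities at T = 4 hold with the same constant and are equalities. -/

import Mathlib

/-!
Along the characteristics `t ± x = const` the Riemann invariants `u_t ± u_x` are constant: their
derivative along a characteristic is a combination of `u_tt - u_xx` and of the antisymmetric part
of the Hessian of `u`. As `u_t = 0` at `x = b`, both invariants are read off the boundary trace
`g = u_x(b, ·)`, giving `u_t, u_x = (g (t + x - b) ∓ g (t - x + b)) / 2`. Then `u_t = 0` at `x = a`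
makes `g` periodic of period `2 (b - a)`, and at `t = 0` the energy density is
`(g (x - b) ^ 2 + g (b - x) ^ 2) / 2`, whose integral over `[a, b]` is half the integral of `g ^ 2`
over `[a - b, b - a]`, that is, over one period.
-/

open MeasureTheory Set Filter Topology Function

theorem eq_of_hasDerivAt_eq_zero {f : ℝ → ℝ} {a b : ℝ} (hf : ContinuousOn f (Icc a b))
    (hf' : ∀ x ∈ Ioo a b, HasDerivAt f 0 x) {x y : ℝ} (hx : x ∈ Icc a b) (hy : y ∈ Icc a b) :
    f x = f y := by
  wlog hxy : x ≤ y generalizing x y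
  · exact (this hy hx (le_of_not_ge hxy)).symm
  rcases hxy.eq_or_lt with rfl | hlt
  · rfl
  obtain ⟨c, -, hc⟩ := exists_hasDerivAt_eq_slope f (fun _ => 0) hlt
    (hf.mono (Icc_subset_Icc hx.1 hy.2))
    (fun z hz => hf' z ⟨hx.1.trans_lt hz.1, hz.2.trans_le hy.2⟩)
  have := (div_eq_zero_iff.mp hc.symm).resolve_right (sub_ne_zero.mpr hlt.ne')
  linarith

section Derivatives

variable {E G : Type*} [NormedAddCommGroup E] [NormedSpace ℝ E] [NormedAddCommGroup G]
  [NormedSpace ℝ G]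

theorem ContDiffOn.hasFDerivAt_fderivWithin {f : E → G} {S : Set E} {p : E}
    (hf : ContDiffOn ℝ 2 f S) (hS : UniqueDiffOn ℝ S) (hp : S ∈ 𝓝 p) :
    HasFDerivAt (fderivWithin ℝ f S) (fderivWithin ℝ (fderivWithin ℝ f S) S p) p :=
  (((hf.fderivWithin hS (m := 1) (by norm_num)).differentiableOn one_ne_zero) p
    (mem_of_mem_nhds hp)).hasFDerivWithinAt.hasFDerivAt hp

variable {F : E → E →L[ℝ] G} {B : E →L[ℝ] E →L[ℝ] G} {γ : ℝ → E} {v : E} {ξ : ℝ}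

theorem HasFDerivAt.hasDerivAt_comp_apply (hF : HasFDerivAt F B (γ ξ)) (hγ : HasDerivAt γ v ξ)
    (w : E) : HasDerivAt (fun ξ => F (γ ξ) w) (B v w) ξ := by
  simpa using (hF.comp_hasDerivAt ξ hγ).clm_apply (hasDerivAt_const ξ w)

theorem HasFDerivAt.apply_eq_of_hasDerivAt {w : E} {g : ℝ → G} {g' : G} (hF : HasFDerivAt F B (γ ξ))
    (hγ : HasDerivAt γ v ξ) (hg : HasDerivAt g g' ξ) (hFg : (fun ξ => F (γ ξ) w) =ᶠ[𝓝 ξ] g) :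
    B v w = g' :=
  ((hg.congr_of_eventuallyEq hFg).unique (hF.hasDerivAt_comp_apply hγ w)).symm

end Derivatives

section ProdUniv

variable {U : ℝ × ℝ → ℝ} {s : Set ℝ} {x t f' : ℝ}

theorem fderivWithin_prod_univ_apply_one_zero (hs : UniqueDiffWithinAt ℝ s x)
    (hU : DifferentiableWithinAt ℝ U (s ×ˢ univ) (x, t))
    (h : HasDerivWithinAt (fun ξ => U (ξ, t)) f' s x) :
    fderivWithin ℝ U (s ×ˢ univ) (x, t) (1, 0) = f' := by
  have hγ : HasDerivWithinAt (fun ξ : ℝ => (ξ, t)) ((1 : ℝ), (0 : ℝ)) s x :=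
    ((hasDerivAt_id x).prodMk (hasDerivAt_const x t)).hasDerivWithinAt
  exact hs.eq_deriv _ (hU.hasFDerivWithinAt.comp_hasDerivWithinAt x hγ
    fun ξ hξ => mk_mem_prod hξ (mem_univ t)) h

theorem fderivWithin_prod_univ_apply_zero_one (hx : x ∈ s)
    (hU : DifferentiableWithinAt ℝ U (s ×ˢ univ) (x, t))
    (h : HasDerivAt (fun τ => U (x, τ)) f' t) :
    fderivWithin ℝ U (s ×ˢ univ) (x, t) (0, 1) = f' := by
  have hγ : HasDerivAt (fun τ : ℝ => (x, τ)) ((0 : ℝ), (1 : ℝ)) t :=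
    (hasDerivAt_const t x).prodMk (hasDerivAt_id t)
  have hcomp := hU.hasFDerivWithinAt.comp_hasDerivWithinAt (s := univ) t hγ.hasDerivWithinAt
    fun τ _ => mk_mem_prod hx (mem_univ τ)
  exact (hasDerivWithinAt_univ.mp hcomp).unique h

end ProdUniv

theorem apply_characteristic_eq_zero {B : ℝ × ℝ →L[ℝ] ℝ × ℝ →L[ℝ] ℝ}
    (hsymm : B (1, 0) (0, 1) = B (0, 1) (1, 0)) (hwave : B (1, 0) (1, 0) = B (0, 1) (0, 1))
    {ε : ℝ} (hε : ε ^ 2 = 1) : B (1, -ε) (ε, 1) = 0 := by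
  have e₁ : ((1 : ℝ), -ε) = ((1 : ℝ), (0 : ℝ)) - ε • ((0 : ℝ), (1 : ℝ)) := by simp
  have e₂ : (ε, (1 : ℝ)) = ε • ((1 : ℝ), (0 : ℝ)) + ((0 : ℝ), (1 : ℝ)) := by simp
  rw [e₁, e₂]
  simp only [map_sub, map_add, map_smul, sub_apply, smul_apply, smul_eq_mul]
  linear_combination ε * hwave + hsymm - B (0, 1) (1, 0) * hε

theorem Function.Periodic.intervalIntegral_comp_sub_add_comp_sub {h : ℝ → ℝ} {a b : ℝ}
    (hper : Periodic h (2 * (b - a))) (hh : Continuous h) :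
    ∫ x in a..b, (h (x - b) + h (b - x)) = ∫ s in 0..2 * (b - a), h s := by
  rw [intervalIntegral.integral_add
    ((by fun_prop : Continuous fun x => h (x - b)).intervalIntegrable _ _)
    ((by fun_prop : Continuous fun x => h (b - x)).intervalIntegrable _ _),
    intervalIntegral.integral_comp_sub_right, intervalIntegral.integral_comp_sub_left, sub_self,
    intervalIntegral.integral_add_adjacent_intervals (hh.intervalIntegrable _ _)
      (hh.intervalIntegrable _ _)]
  simpa [show a - b + 2 * (b - a) = b - a by ring] using hper.intervalIntegral_add_eq (a - b) 0

section Strip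

variable {u ut ux utt uxx : ℝ → ℝ → ℝ} {a b : ℝ}

theorem fderivWithin_fderivWithin_apply_characteristic (hab : a < b)
    (hu : ContDiffOn ℝ 2 (uncurry u) (Icc a b ×ˢ univ))
    (hut : ∀ x ∈ Icc a b, ∀ t : ℝ, HasDerivAt (fun τ => u x τ) (ut x t) t)
    (hutt : ∀ x ∈ Icc a b, ∀ t : ℝ, HasDerivAt (fun τ => ut x τ) (utt x t) t)
    (hux : ∀ t : ℝ, ∀ x ∈ Icc a b, HasDerivWithinAt (fun ξ => u ξ t) (ux x t) (Icc a b) x)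
    (huxx : ∀ t : ℝ, ∀ x ∈ Icc a b, HasDerivWithinAt (fun ξ => ux ξ t) (uxx x t) (Icc a b) x)
    (hwave : ∀ x ∈ Ioo a b, ∀ t : ℝ, utt x t = uxx x t) {ε : ℝ} (hε : ε ^ 2 = 1)
    {y : ℝ} (hy : y ∈ Ioo a b) (s : ℝ) :
    fderivWithin ℝ (fderivWithin ℝ (uncurry u) (Icc a b ×ˢ univ)) (Icc a b ×ˢ univ) (y, s)
      (1, -ε) (ε, 1) = 0 := by
  have hS : UniqueDiffOn ℝ (Icc a b ×ˢ (univ : Set ℝ)) :=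
    (uniqueDiffOn_Icc hab).prod uniqueDiffOn_univ
  have hu₁ : DifferentiableOn ℝ (uncurry u) (Icc a b ×ˢ univ) := hu.differentiableOn (by simp)
  have hIcc : Icc a b ∈ 𝓝 y := Icc_mem_nhds hy.1 hy.2
  have hyS : (y, s) ∈ Icc a b ×ˢ univ := mk_mem_prod (Ioo_subset_Icc_self hy) (mem_univ s)
  have hSy : Icc a b ×ˢ univ ∈ 𝓝 (y, s) := prod_mem_nhds hIcc univ_mem
  have hB := hu.hasFDerivAt_fderivWithin hS hSy
  have hxx := hB.apply_eq_of_hasDerivAt (γ := fun ξ => (ξ, s))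
    ((hasDerivAt_id y).prodMk (hasDerivAt_const y s)) ((huxx s y hyS.1).hasDerivAt hIcc)
    (w := (1, 0)) (eventually_of_mem hIcc fun ξ hξ =>
      fderivWithin_prod_univ_apply_one_zero (uniqueDiffOn_Icc hab ξ hξ)
        (hu₁ _ (mk_mem_prod hξ (mem_univ s))) (hux s ξ hξ))
  have htt := hB.apply_eq_of_hasDerivAt (γ := fun τ => (y, τ))
    ((hasDerivAt_const s y).prodMk (hasDerivAt_id s)) (hutt y hyS.1 s)
    (w := (0, 1)) (Eventually.of_forall fun τ =>
      fderivWithin_prod_univ_apply_zero_one hyS.1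
        (hu₁ _ (mk_mem_prod hyS.1 (mem_univ τ))) (hut y hyS.1 τ))
  have hsymm := (hu _ hyS).isSymmSndFDerivWithinAt (by simp) hS
    (subset_closure (mem_interior_iff_mem_nhds.mpr hSy)) hyS (1, 0) (0, 1)
  exact apply_characteristic_eq_zero hsymm (by rw [hxx, htt, hwave y hy s]) hε

theorem riemannInvariant_eq (hab : a < b)
    (hu : ContDiffOn ℝ 2 (uncurry u) (Icc a b ×ˢ univ))
    (hut : ∀ x ∈ Icc a b, ∀ t : ℝ, HasDerivAt (fun τ => u x τ) (ut x t) t)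
    (hutt : ∀ x ∈ Icc a b, ∀ t : ℝ, HasDerivAt (fun τ => ut x τ) (utt x t) t)
    (hux : ∀ t : ℝ, ∀ x ∈ Icc a b, HasDerivWithinAt (fun ξ => u ξ t) (ux x t) (Icc a b) x)
    (huxx : ∀ t : ℝ, ∀ x ∈ Icc a b, HasDerivWithinAt (fun ξ => ux ξ t) (uxx x t) (Icc a b) x)
    (hwave : ∀ x ∈ Ioo a b, ∀ t : ℝ, utt x t = uxx x t) {ε : ℝ} (hε : ε ^ 2 = 1)
    {x y : ℝ} (hx : x ∈ Icc a b) (hy : y ∈ Icc a b) (t : ℝ) :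
    ε * ux x t + ut x t = ε * ux y (t + ε * (x - y)) + ut y (t + ε * (x - y)) := by
  have hS : UniqueDiffOn ℝ (Icc a b ×ˢ (univ : Set ℝ)) :=
    (uniqueDiffOn_Icc hab).prod uniqueDiffOn_univ
  set F := fderivWithin ℝ (uncurry u) (Icc a b ×ˢ univ)
  have hF : ContinuousOn F (Icc a b ×ˢ univ) := hu.continuousOn_fderivWithin hS (by norm_num)
  have hFR : ∀ ξ ∈ Icc a b, ∀ τ, F (ξ, τ) (ε, 1) = ε * ux ξ τ + ut ξ τ := by
    intro ξ hξ τ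
    have hu₁ := hu.differentiableOn (by simp) _ (mk_mem_prod hξ (mem_univ τ))
    rw [show (ε, (1 : ℝ)) = ε • ((1 : ℝ), (0 : ℝ)) + ((0 : ℝ), (1 : ℝ)) by simp, map_add,
      map_smul, fderivWithin_prod_univ_apply_one_zero (uniqueDiffOn_Icc hab ξ hξ) hu₁ (hux τ ξ hξ),
      fderivWithin_prod_univ_apply_zero_one hξ hu₁ (hut ξ hξ τ), smul_eq_mul]
  have hγ : ∀ ξ, HasDerivAt (fun ξ => (ξ, t + ε * x - ε * ξ)) ((1 : ℝ), -ε) ξ := fun ξ => by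
    simpa using (hasDerivAt_id ξ).prodMk (((hasDerivAt_id ξ).const_mul ε).const_sub (t + ε * x))
  have hcont : ContinuousOn (fun ξ => F (ξ, t + ε * x - ε * ξ) (ε, 1)) (Icc a b) :=
    (hF.comp (by fun_prop : Continuous fun ξ => (ξ, t + ε * x - ε * ξ)).continuousOn
      fun ξ hξ => mk_mem_prod hξ (mem_univ _)).clm_apply continuousOn_const
  have hderiv : ∀ ξ ∈ Ioo a b, HasDerivAt (fun ξ => F (ξ, t + ε * x - ε * ξ) (ε, 1)) 0 ξ := by
    intro ξ hξ
    have hSξ : Icc a b ×ˢ univ ∈ 𝓝 (ξ, t + ε * x - ε * ξ) :=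
      prod_mem_nhds (Icc_mem_nhds hξ.1 hξ.2) univ_mem
    simpa only [fderivWithin_fderivWithin_apply_characteristic hab hu hut hutt hux huxx hwave hε hξ]
      using (hu.hasFDerivAt_fderivWithin hS hSξ).hasDerivAt_comp_apply
        (γ := fun ξ => (ξ, t + ε * x - ε * ξ)) (hγ ξ) (ε, 1)
  have hconst := eq_of_hasDerivAt_eq_zero hcont hderiv hx hy
  simp only [hFR x hx, hFR y hy] at hconst
  convert hconst using 4 <;> ring

theorem ContDiffOn.continuousOn_uncurry_of_hasDerivWithinAt (hab : a < b)
    (hu : ContDiffOn ℝ 1 (uncurry u) (Icc a b ×ˢ univ))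
    (hux : ∀ t : ℝ, ∀ x ∈ Icc a b, HasDerivWithinAt (fun ξ => u ξ t) (ux x t) (Icc a b) x) :
    ContinuousOn (uncurry ux) (Icc a b ×ˢ univ) := by
  have hS : UniqueDiffOn ℝ (Icc a b ×ˢ (univ : Set ℝ)) :=
    (uniqueDiffOn_Icc hab).prod uniqueDiffOn_univ
  refine ((hu.continuousOn_fderivWithin hS le_rfl).clm_apply
    (continuousOn_const (c := ((1 : ℝ), (0 : ℝ))))).congr fun ⟨x, t⟩ ⟨hx, _⟩ => ?_
  exact (fderivWithin_prod_univ_apply_one_zero (uniqueDiffOn_Icc hab x hx)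
    (hu.differentiableOn one_ne_zero _ ⟨hx, mem_univ t⟩) (hux t x hx)).symm

theorem dAlembert_of_riemannInvariant_eq
    (hR : ∀ ε : ℝ, ε ^ 2 = 1 → ∀ x ∈ Icc a b, ∀ t : ℝ,
      ε * ux x t + ut x t = ε * ux b (t + ε * (x - b)) + ut b (t + ε * (x - b)))
    (hb : ∀ t, ut b t = 0) {x : ℝ} (hx : x ∈ Icc a b) (t : ℝ) :
    ut x t = (ux b (t + (x - b)) - ux b (t - (x - b))) / 2 ∧
      ux x t = (ux b (t + (x - b)) + ux b (t - (x - b))) / 2 := by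
  have hplus := hR 1 (by norm_num) x hx t
  have hminus := hR (-1) (by norm_num) x hx t
  simp only [hb, one_mul, neg_one_mul, ← sub_eq_add_neg, add_zero] at hplus hminus
  constructor <;> linarith

theorem periodic_of_riemannInvariant_eq (hab : a ≤ b)
    (hR : ∀ ε : ℝ, ε ^ 2 = 1 → ∀ x ∈ Icc a b, ∀ t : ℝ,
      ε * ux x t + ut x t = ε * ux b (t + ε * (x - b)) + ut b (t + ε * (x - b)))
    (ha : ∀ t, ut a t = 0) (hb : ∀ t, ut b t = 0) :
    Periodic (ux b) (2 * (b - a)) := fun s => by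
  have h := (dAlembert_of_riemannInvariant_eq hR hb (left_mem_Icc.2 hab) (s + (b - a))).1
  rw [ha, show s + (b - a) + (a - b) = s by ring,
    show s + (b - a) - (a - b) = s + 2 * (b - a) by ring] at h
  linarith

theorem energyDensity_eq_of_riemannInvariant_eq
    (hR : ∀ ε : ℝ, ε ^ 2 = 1 → ∀ x ∈ Icc a b, ∀ t : ℝ,
      ε * ux x t + ut x t = ε * ux b (t + ε * (x - b)) + ut b (t + ε * (x - b)))
    (hb : ∀ t, ut b t = 0) {x : ℝ} (hx : x ∈ Icc a b) :
    ut x 0 ^ 2 + ux x 0 ^ 2 = (ux b (x - b) ^ 2 + ux b (b - x) ^ 2) / 2 := by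
  obtain ⟨hut, hux⟩ := dAlembert_of_riemannInvariant_eq hR hb hx 0
  rw [hut, hux, zero_add, zero_sub, neg_sub]
  ring

theorem observability_equality_wave_Icc (hab : a < b)
    (hu : ContDiffOn ℝ 2 (uncurry u) (Icc a b ×ˢ univ))
    (hut : ∀ x ∈ Icc a b, ∀ t : ℝ, HasDerivAt (fun τ => u x τ) (ut x t) t)
    (hutt : ∀ x ∈ Icc a b, ∀ t : ℝ, HasDerivAt (fun τ => ut x τ) (utt x t) t)
    (hux : ∀ t : ℝ, ∀ x ∈ Icc a b, HasDerivWithinAt (fun ξ => u ξ t) (ux x t) (Icc a b) x)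
    (huxx : ∀ t : ℝ, ∀ x ∈ Icc a b, HasDerivWithinAt (fun ξ => ux ξ t) (uxx x t) (Icc a b) x)
    (hwave : ∀ x ∈ Ioo a b, ∀ t : ℝ, utt x t = uxx x t)
    (hbc : ∀ t : ℝ, u a t = 0 ∧ u b t = 0) :
    ∫ t in 0..2 * (b - a), ux b t ^ 2 = 2 * ∫ x in a..b, (ut x 0 ^ 2 + ux x 0 ^ 2) := by
  have hb : b ∈ Icc a b := right_mem_Icc.2 hab.le
  have hR : ∀ ε : ℝ, ε ^ 2 = 1 → ∀ x ∈ Icc a b, ∀ t : ℝ,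
      ε * ux x t + ut x t = ε * ux b (t + ε * (x - b)) + ut b (t + ε * (x - b)) :=
    fun ε hε x hx t => riemannInvariant_eq hab hu hut hutt hux huxx hwave hε hx hb t
  have hut_eq_zero : ∀ x ∈ Icc a b, (∀ t, u x t = 0) → ∀ t, ut x t = 0 := fun x hx h0 t =>
    (hut x hx t).unique (by simp only [h0]; exact hasDerivAt_const t 0)
  have hut_b := hut_eq_zero b hb fun t => (hbc t).2
  have hper := periodic_of_riemannInvariant_eq hab.le hR
    (hut_eq_zero a (left_mem_Icc.2 hab.le) fun t => (hbc t).1) hut_b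
  have hg : Continuous (ux b) := ((hu.of_le (by norm_num)).continuousOn_uncurry_of_hasDerivWithinAt
    hab hux).comp_continuous (by fun_prop) fun t => mk_mem_prod hb (mem_univ t)
  calc ∫ t in 0..2 * (b - a), ux b t ^ 2
      = ∫ x in a..b, (ux b (x - b) ^ 2 + ux b (b - x) ^ 2) :=
        ((hper.comp (· ^ 2)).intervalIntegral_comp_sub_add_comp_sub (by fun_prop)).symm
    _ = ∫ x in a..b, 2 * (ut x 0 ^ 2 + ux x 0 ^ 2) := by
        refine intervalIntegral.integral_congr fun x hx => ?_
        rw [uIcc_of_le hab.le] at hx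
        simp only [energyDensity_eq_of_riemannInvariant_eq hR hut_b hx]
        ring
    _ = 2 * ∫ x in a..b, (ut x 0 ^ 2 + ux x 0 ^ 2) := intervalIntegral.integral_const_mul _ _

end Strip

theorem observability_equality_at_T4_wave
    (u ut ux utt uxx : ℝ → ℝ → ℝ)
    -- u is C² on [-1,1] × ℝ
    (hu : ContDiffOn ℝ 2 (fun p : ℝ × ℝ => u p.1 p.2)
      (Set.Icc (-1 : ℝ) 1 ×ˢ (Set.univ : Set ℝ)))
    -- ut, utt are the first and second time derivatives of u
    (hut : ∀ x ∈ Set.Icc (-1 : ℝ) 1, ∀ t : ℝ,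
      HasDerivAt (fun τ => u x τ) (ut x t) t)
    (hutt : ∀ x ∈ Set.Icc (-1 : ℝ) 1, ∀ t : ℝ,
      HasDerivAt (fun τ => ut x τ) (utt x t) t)
    -- ux, uxx are the first and second space derivatives of u (one-sided at ±1)
    (hux : ∀ t : ℝ, ∀ x ∈ Set.Icc (-1 : ℝ) 1,
      HasDerivWithinAt (fun ξ => u ξ t) (ux x t) (Set.Icc (-1 : ℝ) 1) x)
    (huxx : ∀ t : ℝ, ∀ x ∈ Set.Icc (-1 : ℝ) 1,
      HasDerivWithinAt (fun ξ => ux ξ t) (uxx x t) (Set.Icc (-1 : ℝ) 1) x)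
    -- the wave equation u_tt = u_xx on (-1,1) × ℝ
    (hwave : ∀ x ∈ Set.Ioo (-1 : ℝ) 1, ∀ t : ℝ, utt x t = uxx x t)
    -- homogeneous Dirichlet boundary conditions
    (hbc : ∀ t : ℝ, u (-1) t = 0 ∧ u 1 t = 0) :
    (∫ t in (0 : ℝ)..4, (ux 1 t) ^ 2)
      = 4 * ((1 / 2) * ∫ x in (-1 : ℝ)..1, ((ut x 0) ^ 2 + (ux x 0) ^ 2)) := by
  have h := observability_equality_wave_Icc (by norm_num) hu hut hutt hux huxx hwave hbc
  rw [show (2 * (1 - -1) : ℝ) = 4 by norm_num] at h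
  rw [h]
  ring
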